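/- Let C be a covering of a finite nonempty set U. If the family {N(x) | x ∈ U} of neighborhoods is a partition of U, then for every X ∈ P the complement Xᶜ = U \ X also belongs to P; consequently (P, ⊆) is a Boolean lattice (a complemented distributive bounded lattice with meet ∩, join ∪, least element ∅ and greatest element U). -/

import Mathlib

/-!
When the neighborhoods partition `U`, membership in neighborhoods is symmetric:
`y ∈ N(x)` forces `N(y) = N(x)`, since `N(y)` and `N(x)` share `y`. A set `X` is a fixed
point exactly when it is a union of neighborhoods, so if `x ∉ X` and some `y ∈ N(x)` lay
in `X`, then `x ∈ N(y) ⊆ X`; hence `N(x) ⊆ Xᶜ`.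
-/

open Set

variable {U : Type*}

/-- The neighborhood of `x` w.r.t. the covering `C`: the intersection of all
blocks of `C` containing `x`. -/
def nbhd (C : Set (Set U)) (x : U) : Set U := ⋂₀ {K | K ∈ C ∧ x ∈ K}

/-- The sixth-type lower approximation. -/
def xL (C : Set (Set U)) (X : Set U) : Set U := {x | nbhd C x ⊆ X}

/-- The fixed point set of neighborhoods. -/
def pFix (C : Set (Set U)) : Set (Set U) := {X | xL C X = X}

section

variable (C : Set (Set U))

lemma mem_nbhd_self (x : U) : x ∈ nbhd C x := fun _ hK => hK.2

lemma mem_pFix_iff {X : Set U} : X ∈ pFix C ↔ ∀ x ∈ X, nbhd C x ⊆ X :=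
  ⟨fun h x hx => (h.symm ▸ hx : x ∈ xL C X),
   fun h => Subset.antisymm (fun x hx => hx (mem_nbhd_self C x)) h⟩

lemma empty_mem_pFix : (∅ : Set U) ∈ pFix C :=
  (mem_pFix_iff C).2 fun _ hx => hx.elim

lemma univ_mem_pFix : (univ : Set U) ∈ pFix C :=
  (mem_pFix_iff C).2 fun _ _ => subset_univ _

lemma union_mem_pFix {X Y : Set U} (hX : X ∈ pFix C) (hY : Y ∈ pFix C) :
    X ∪ Y ∈ pFix C := by
  rw [mem_pFix_iff] at hX hY ⊢
  rintro x (hx | hx)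
  · exact (hX x hx).trans subset_union_left
  · exact (hY x hx).trans subset_union_right

lemma inter_mem_pFix {X Y : Set U} (hX : X ∈ pFix C) (hY : Y ∈ pFix C) :
    X ∩ Y ∈ pFix C := by
  rw [mem_pFix_iff] at hX hY ⊢
  exact fun x hx => subset_inter (hX x hx.1) (hY x hx.2)

lemma mem_nbhd_symm_of_pairwise
    (hpart : ∀ x y : U, nbhd C x = nbhd C y ∨ nbhd C x ∩ nbhd C y = ∅) {x y : U}
    (hy : y ∈ nbhd C x) : x ∈ nbhd C y := by
  rcases hpart x y with h | h
  · exact h ▸ mem_nbhd_self C x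
  · exact absurd (h ▸ ⟨hy, mem_nbhd_self C y⟩ : y ∈ (∅ : Set U)) (notMem_empty y)

lemma compl_mem_pFix_of_symm (hsymm : ∀ x y : U, y ∈ nbhd C x → x ∈ nbhd C y)
    {X : Set U} (hX : X ∈ pFix C) : Xᶜ ∈ pFix C := by
  rw [mem_pFix_iff] at hX ⊢
  exact fun x hx y hy hyX => hx (hX y hyX (hsymm x y hy))

end

theorem stmt7_general (C : Set (Set U))
    (hpart : ∀ x y : U, nbhd C x = nbhd C y ∨ nbhd C x ∩ nbhd C y = ∅) :
    (∀ X ∈ pFix C, Xᶜ ∈ pFix C) ∧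
    (∅ : Set U) ∈ pFix C ∧ (Set.univ : Set U) ∈ pFix C ∧
    ∀ X ∈ pFix C, ∀ Y ∈ pFix C, X ∪ Y ∈ pFix C ∧ X ∩ Y ∈ pFix C :=
  ⟨fun _ => compl_mem_pFix_of_symm C fun _ _ => mem_nbhd_symm_of_pairwise C hpart,
   empty_mem_pFix C, univ_mem_pFix C,
   fun _ hX _ hY => ⟨union_mem_pFix C hX hY, inter_mem_pFix C hX hY⟩⟩

/-- if the neighborhoods form a partition of `U`, then `P` is
closed under complements; together with the closure of `P` under `∪` and `∩`
and `∅, U ∈ P`, this makes `(P, ⊆)` a Boolean lattice. -/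
theorem stmt7 [Fintype U] [Nonempty U] (C : Set (Set U))
    (hne : ∀ K ∈ C, K.Nonempty) (hcov : ⋃₀ C = Set.univ)
    (hpart : ∀ x y : U, nbhd C x = nbhd C y ∨ nbhd C x ∩ nbhd C y = ∅) :
    (∀ X ∈ pFix C, Xᶜ ∈ pFix C) ∧
    (∅ : Set U) ∈ pFix C ∧ (Set.univ : Set U) ∈ pFix C ∧
    ∀ X ∈ pFix C, ∀ Y ∈ pFix C, X ∪ Y ∈ pFix C ∧ X ∩ Y ∈ pFix C :=
  stmt7_general C hpart
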